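/- arXiv:2602.01733 — 2 statements merged into one kernel-verified Lean document; each statement's English description precedes it below -/
import Mathlib

section
/- Let h : [0,∞) → [0,∞) be strictly increasing, let s_1, ..., s_n, w > 0 with h(w) > 0, and for α ∈ (0,1) define C(α) = {y ∈ Y : (n+1)h(S(y)) / (Σ_i h(s_i) + h(S(y))) < 1/α}, where S : Y → [0,∞) is a score function on a finite label set Y. Suppose T ∈ ℕ and w = sup{l > 0 : |{y : S(y) < l}| ≤ T}. Then the infimum α̃ = inf{α ∈ (0,1) : |C(α)| ≤ T} satisfies α̃ = (Σ_{i=1}^n h(s_i) / h(w) + 1) / (n+1), provided this quantity lies in (0,1). -/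
/-!
For `α > 0` the condition `E(y) < 1/α` is equivalent to `((n+1)α - 1) h(S y) < Σ h(sᵢ)`.
At `α̃` the coefficient `(n+1)α̃ - 1` equals `Σ h(sᵢ) / h(w)`, so by strict monotonicity of `h`,
`C(α̃) = {S < w}`, while for every smaller `α` the set `C(α)` contains `{S ≤ w}`. Because `Y` is
finite, `l ↦ |{S < l}|` is a left-continuous step function with right limits `|{S ≤ l}|`, so
the choice of `w` as a supremum gives `|{S < w}| ≤ T < |{S ≤ w}|`; hence `α̃` is the least
admissible level.
-/

open MeasureTheory

open Filter Topology

section Counting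

variable {Y : Type*} [Finite Y] (S : Y → ℝ)

theorem ncard_setOf_lt_le_of_forall_lt {w : ℝ} {T : ℕ}
    (hT : ∀ l < w, Set.ncard {y | S y < l} ≤ T) : Set.ncard {y | S y < w} ≤ T := by
  have hev : ∀ᶠ l in 𝓝[<] w, ∀ y, S y < w → S y < l :=
    eventually_all.2 fun y => eventually_imp_distrib_left.2 fun hy =>
      (eventually_gt_nhds hy).filter_mono nhdsWithin_le_nhds
  obtain ⟨l, hsub, hlw⟩ := (hev.and self_mem_nhdsWithin).exists
  exact (Set.ncard_le_ncard hsub (Set.toFinite _)).trans (hT l hlw)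

theorem lt_ncard_setOf_le_of_forall_gt {w : ℝ} {T : ℕ}
    (hT : ∀ l > w, T < Set.ncard {y | S y < l}) : T < Set.ncard {y | S y ≤ w} := by
  have hev : ∀ᶠ l in 𝓝[>] w, ∀ y, S y < l → S y ≤ w :=
    eventually_all.2 fun y => by
      rcases le_or_gt (S y) w with hy | hy
      · exact Eventually.of_forall fun _ _ => hy
      · exact ((eventually_lt_nhds hy).filter_mono nhdsWithin_le_nhds).mono
          fun l hl hyl => absurd hyl hl.not_gt
  obtain ⟨l, hsub, hwl⟩ := (hev.and self_mem_nhdsWithin).exists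
  exact (hT l hwl).trans_le (Set.ncard_le_ncard hsub (Set.toFinite _))

end Counting

theorem ncard_setOf_lt_le_and_lt_ncard_setOf_le_of_eq_csSup {Y : Type*} [Finite Y]
    (S : Y → ℝ) {w : ℝ} {T : ℕ} (hw : 0 < w)
    (hwdef : w = sSup {l : ℝ | 0 < l ∧ Set.ncard {y : Y | S y < l} ≤ T}) :
    Set.ncard {y | S y < w} ≤ T ∧ T < Set.ncard {y | S y ≤ w} := by
  set L := {l : ℝ | 0 < l ∧ Set.ncard {y : Y | S y < l} ≤ T}
  have hne : L.Nonempty := Set.nonempty_iff_ne_empty.2 fun hL => by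
    simp [hL, hwdef] at hw
  have hbdd : BddAbove L := by
    by_contra hL
    simp [Real.sSup_of_not_bddAbove hL, hwdef] at hw
  have mono : Monotone fun l => Set.ncard {y | S y < l} := fun l l' hll' =>
    Set.ncard_le_ncard (fun y hy => lt_of_lt_of_le hy hll') (Set.toFinite _)
  refine ⟨ncard_setOf_lt_le_of_forall_lt S fun l hl => ?_,
    lt_ncard_setOf_le_of_forall_gt S fun l hl => ?_⟩
  · obtain ⟨l', ⟨-, hl'⟩, hll'⟩ := exists_lt_of_lt_csSup hne (hwdef ▸ hl)
    exact (mono hll'.le).trans hl'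
  · by_contra! hT
    exact notMem_of_csSup_lt (hwdef ▸ hl) hbdd ⟨hw.trans hl, hT⟩

theorem mul_div_add_lt_one_div_iff {N A H α : ℝ} (hAH : 0 < A + H) (hα : 0 < α) :
    N * H / (A + H) < 1 / α ↔ (N * α - 1) * H < A := by
  rw [div_lt_div_iff₀ hAH hα]
  constructor <;> intro h <;> linarith

section EValue

variable {Y : Type*} (S : Y → ℝ) (hS : ∀ y, 0 ≤ S y) {h : ℝ → ℝ}
  (hmono : StrictMonoOn h (Set.Ici 0)) (hnn : ∀ s, 0 ≤ s → 0 ≤ h s) {A N w : ℝ}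
include hS hmono hnn

theorem setOf_mul_div_add_lt_eq_setOf_lt (hA : 0 < A) (hN : 0 < N) (hw : 0 ≤ w)
    (hhw : 0 < h w) :
    {y | N * h (S y) / (A + h (S y)) < 1 / ((A / h w + 1) / N)} = {y | S y < w} := by
  ext y
  have hH := hnn _ (hS y)
  rw [Set.mem_ofPred_eq, mul_div_add_lt_one_div_iff (by linarith) (by positivity),
    mul_div_cancel₀ _ hN.ne', add_sub_cancel_right, div_mul_eq_mul_div,
    div_lt_iff₀ hhw, mul_lt_mul_iff_right₀ hA, hmono.lt_iff_lt (hS y) hw]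
  rfl

theorem setOf_le_subset_setOf_mul_div_add_lt {α : ℝ} (hα : 0 < α)
    (hαlt : α < (A / h w + 1) / N) (hA : 0 < A) (hN : 0 < N) (hw : 0 ≤ w)
    (hhw : 0 < h w) :
    {y | S y ≤ w} ⊆ {y | N * h (S y) / (A + h (S y)) < 1 / α} := by
  intro y hy
  have hH := hnn _ (hS y)
  have hHw : h (S y) ≤ h w := (hmono.le_iff_le (hS y) hw).2 hy
  have hc : N * α - 1 < A / h w := by
    rw [lt_div_iff₀ hN] at hαlt
    linarith
  rw [Set.mem_ofPred_eq, mul_div_add_lt_one_div_iff (by linarith) hα]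
  rcases le_or_gt (N * α - 1) 0 with hc0 | hc0
  · nlinarith
  · calc (N * α - 1) * h (S y) ≤ (N * α - 1) * h w := by gcongr
      _ < A / h w * h w := by gcongr
      _ = A := div_mul_cancel₀ A hhw.ne'

end EValue

/-- Closed-form expression for the data-dependent miscoverage level. -/
theorem stmt3 {Y : Type*} [Fintype Y] (S : Y → ℝ) (hS : ∀ y, 0 ≤ S y)
    (h : ℝ → ℝ) (hmono : StrictMonoOn h (Set.Ici 0)) (hnn : ∀ s, 0 ≤ s → 0 ≤ h s)
    (n : ℕ) (s : Fin n → ℝ) (hs : ∀ i, 0 < s i)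
    (w : ℝ) (hw : 0 < w) (hhw : 0 < h w) (T : ℕ)
    (hwdef : w = sSup {l : ℝ | 0 < l ∧ Set.ncard {y : Y | S y < l} ≤ T})
    (hin : ((∑ i, h (s i)) / h w + 1) / ((n : ℝ) + 1) ∈ Set.Ioo (0 : ℝ) 1) :
    sInf {α : ℝ | α ∈ Set.Ioo (0 : ℝ) 1 ∧
        Set.ncard {y : Y |
          ((n : ℝ) + 1) * h (S y) / ((∑ i, h (s i)) + h (S y)) < 1 / α} ≤ T}
      = ((∑ i, h (s i)) / h w + 1) / ((n : ℝ) + 1) := by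
  have hn : n ≠ 0 := by
    rintro rfl
    simp at hin
  have hA : 0 < ∑ i, h (s i) :=
    Finset.sum_pos (fun i _ => (hnn 0 le_rfl).trans_lt (hmono Set.self_mem_Ici (hs i).le (hs i)))
      (Finset.univ_nonempty_iff.2 ⟨⟨0, Nat.pos_of_ne_zero hn⟩⟩)
  have hN : (0 : ℝ) < n + 1 := by positivity
  obtain ⟨hbelow, habove⟩ := ncard_setOf_lt_le_and_lt_ncard_setOf_le_of_eq_csSup S hw hwdef
  refine IsLeast.csInf_eq ⟨⟨hin, ?_⟩, fun α ⟨⟨hα, _⟩, hcard⟩ => ?_⟩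
  · rwa [setOf_mul_div_add_lt_eq_setOf_lt S hS hmono hnn hA hN hw.le hhw]
  · by_contra! hlt
    have hsub := setOf_le_subset_setOf_mul_div_add_lt S hS hmono hnn hα hlt hA hN hw.le hhw
    exact (habove.trans_le (Set.ncard_le_ncard hsub (Set.toFinite _))).not_ge hcard
end

section
/- Let w_m, w_M, ε satisfy 0 < ε < w_m/2 and 0 < w_m ≤ w_M. Fix w ∈ [w_m, w_M] and define Δ^ε(s) = (ε/w)s·1{s < w} − (ε/(s − w + 1))·1{s ≥ w} for s ≥ 0. Then (i) |Δ^ε(s)| ≤ ε for all s ≥ 0, and (ii) the function s ↦ w·1{s ≥ w} + Δ^ε(s) is strictly increasing on [0,∞). -/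
/-!
Below `w` the perturbed step is the line `ε s / w`, increasing from `0` towards `ε`; from `w` on it
is `w - ε / (s - w + 1)`, increasing from `w - ε` towards `w`. Since `2 ε ≤ w`, every value of the
first branch lies below every value of the second, so the two branches glue to a strictly
increasing function.
-/

open Set

theorem StrictMonoOn.of_lt_of_le_split {α β : Type*} [LinearOrder α] [Preorder β]
    {f : α → β} {s : Set α} {c : α} (hlo : StrictMonoOn f (s ∩ Iio c))
    (hhi : StrictMonoOn f (s ∩ Ici c))
    (hjump : ∀ x ∈ s, ∀ y ∈ s, x < c → c ≤ y → f x < f y) : StrictMonoOn f s := by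
  intro a ha b hb hab
  rcases lt_or_ge a c with hac | hca
  · rcases lt_or_ge b c with hbc | hcb
    · exact hlo ⟨ha, hac⟩ ⟨hb, hbc⟩ hab
    · exact hjump a ha b hb hac hcb
  · exact hhi ⟨ha, hca⟩ ⟨hb, hca.trans hab.le⟩ hab

/-- The paper's `Δ^ε`. -/
noncomputable def stepPerturbation (ε w s : ℝ) : ℝ :=
  if s < w then ε / w * s else -(ε / (s - w + 1))

noncomputable def perturbedStep (ε w s : ℝ) : ℝ :=
  (if w ≤ s then w else 0) + stepPerturbation ε w s

section

variable {ε w s : ℝ}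

theorem stepPerturbation_of_lt (h : s < w) : stepPerturbation ε w s = ε / w * s :=
  if_pos h

theorem stepPerturbation_of_le (h : w ≤ s) :
    stepPerturbation ε w s = -(ε / (s - w + 1)) :=
  if_neg h.not_gt

theorem perturbedStep_of_lt (h : s < w) : perturbedStep ε w s = ε / w * s := by
  rw [perturbedStep, if_neg h.not_ge, stepPerturbation_of_lt h, zero_add]

theorem perturbedStep_of_le (h : w ≤ s) :
    perturbedStep ε w s = w - ε / (s - w + 1) := by
  rw [perturbedStep, if_pos h, stepPerturbation_of_le h, ← sub_eq_add_neg]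

theorem div_mul_lt_of_lt (hε : 0 < ε) (hs : 0 ≤ s) (h : s < w) : ε / w * s < ε := by
  have hw : 0 < w := hs.trans_lt h
  calc ε / w * s < ε / w * w := by gcongr
    _ = ε := div_mul_cancel₀ ε hw.ne'

theorem div_sub_add_one_le (hε : 0 ≤ ε) (h : w ≤ s) : ε / (s - w + 1) ≤ ε :=
  div_le_self hε (by linarith)

theorem abs_stepPerturbation_le (hε : 0 ≤ ε) (hs : 0 ≤ s) :
    |stepPerturbation ε w s| ≤ ε := by
  rcases lt_or_ge s w with h | h
  · rw [stepPerturbation_of_lt h]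
    rcases hε.eq_or_lt with rfl | hε
    · simp
    rw [abs_of_nonneg (by have := hs.trans_lt h; positivity)]
    exact (div_mul_lt_of_lt hε hs h).le
  · have hpos : 0 < s - w + 1 := by linarith
    rw [stepPerturbation_of_le h, abs_neg, abs_of_nonneg (by positivity)]
    exact div_sub_add_one_le hε h

theorem strictMonoOn_perturbedStep (hε : 0 < ε) (hw : 2 * ε ≤ w) :
    StrictMonoOn (perturbedStep ε w) (Ici 0) := by
  have hw0 : 0 < w := by linarith
  refine StrictMonoOn.of_lt_of_le_split (c := w) ?_ ?_ ?_
  · rintro a ⟨-, haw : a < w⟩ b ⟨-, hbw : b < w⟩ hab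
    rw [perturbedStep_of_lt haw, perturbedStep_of_lt hbw]
    gcongr
  · rintro a ⟨-, hwa : w ≤ a⟩ b ⟨-, hwb : w ≤ b⟩ hab
    rw [perturbedStep_of_le hwa, perturbedStep_of_le hwb]
    have := div_lt_div_of_pos_left hε (by linarith) (by linarith : a - w + 1 < b - w + 1)
    linarith
  · intro x hx y _ hxw hwy
    rw [perturbedStep_of_lt hxw, perturbedStep_of_le hwy]
    have := div_mul_lt_of_lt hε hx hxw
    have := div_sub_add_one_le hε.le hwy
    linarith

end

theorem stmt18_general (wm wM ε w : ℝ) (hε : 0 < ε) (hεm : ε < wm / 2)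
    (hw : w ∈ Set.Icc wm wM) :
    (∀ s : ℝ, 0 ≤ s →
      |(if s < w then ε / w * s else -(ε / (s - w + 1)))| ≤ ε) ∧
    StrictMonoOn
      (fun s : ℝ => (if w ≤ s then w else 0)
        + (if s < w then ε / w * s else -(ε / (s - w + 1))))
      (Set.Ici 0) :=
  ⟨fun _ hs => abs_stepPerturbation_le hε.le hs,
    strictMonoOn_perturbedStep hε (by linarith [hw.1])⟩

/-- The perturbation Δ^ε is uniformly ε-small and makes the step transformation
strictly increasing on [0,∞). -/
theorem stmt18 (wm wM ε w : ℝ) (hε : 0 < ε) (hεm : ε < wm / 2)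
    (hm : 0 < wm) (hmM : wm ≤ wM) (hw : w ∈ Set.Icc wm wM) :
    (∀ s : ℝ, 0 ≤ s →
      |(if s < w then ε / w * s else -(ε / (s - w + 1)))| ≤ ε) ∧
    StrictMonoOn
      (fun s : ℝ => (if w ≤ s then w else 0)
        + (if s < w then ε / w * s else -(ε / (s - w + 1))))
      (Set.Ici 0) :=
  stmt18_general wm wM ε w hε hεm hw
end
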